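/- Let ABC be a triangle with acute base angles α = ∠BAC and β = ∠ABC, and let CH be the altitude from C with H on AB, normalized so that CH = 1. Suppose equal cevians AA₁ and BB₁ intersect at a point O on line CH with signed distance y = (HO⃗ · HC⃗)/|HC⃗| ≠ 0. Then either the triangle is isosceles (cot α = cot β), or y satisfies y³ + y(cot²α + cot²β − 1) + 2 cot α cot β = 0. -/

import Mathlib

/-!
Put `H` at the origin, with unit vectors `e` along `AB` and `u = HC`, so that `A = H - a e`,
`B = H + b e`, `C = H + u`, `O = H + y u`, and `cot α = a`, `cot β = b` (signed). Writing
`A₁ = B + s₀ (C - B)`, the condition that `AA₁` passes through `O` reads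
`s₀ (a + y b) = y (a + b)`, and `AA₁ = |s₀ / y| · AO` with `AO² = a² + y²`; symmetrically for
`BB₁`. Equal cevians thus give `s₀² (a² + y²) = s₁² (b² + y²)`, and eliminating `s₀, s₁` leaves
`(a² + y²)(b + y a)² = (b² + y²)(a + y b)²`, whose difference of sides factors as
`(a - b)(a + b) y (y³ + y (a² + b² - 1) + 2 a b)`.
-/

open EuclideanGeometry Real

noncomputable section

/-- The Euclidean plane. -/
abbrev Pt : Type := EuclideanSpace ℝ (Fin 2)

/-- The point of the Euclidean plane with the given coordinates. -/
def pt (x y : ℝ) : Pt := WithLp.toLp 2 ![x, y]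

theorem eq_or_cubic_eq_zero_of_cevian_relations {a b y s₀ s₁ : ℝ} (hy : y ≠ 0) (hab : a + b ≠ 0)
    (h₀ : s₀ * (a + y * b) = y * (a + b)) (h₁ : s₁ * (b + y * a) = y * (a + b))
    (hlen : s₀ ^ 2 * (a ^ 2 + y ^ 2) = s₁ ^ 2 * (b ^ 2 + y ^ 2)) :
    a = b ∨ y ^ 3 + y * (a ^ 2 + b ^ 2 - 1) + 2 * a * b = 0 := by
  have key : (y * (a + b)) ^ 2 * ((a + b) * y) *
      ((a - b) * (y ^ 3 + y * (a ^ 2 + b ^ 2 - 1) + 2 * a * b)) = 0 := by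
    linear_combination (a + y * b) ^ 2 * (b + y * a) ^ 2 * hlen
      - (a ^ 2 + y ^ 2) * (b + y * a) ^ 2 * (s₀ * (a + y * b) + y * (a + b)) * h₀
      + (b ^ 2 + y ^ 2) * (a + y * b) ^ 2 * (s₁ * (b + y * a) + y * (a + b)) * h₁
  have hm : (y * (a + b)) ^ 2 * ((a + b) * y) ≠ 0 := by positivity
  rcases mul_eq_zero.mp ((mul_eq_zero.mp key).resolve_left hm) with h | h
  · exact .inl (sub_eq_zero.mp h)
  · exact .inr h

section Frame

variable {V : Type*} [NormedAddCommGroup V] [InnerProductSpace ℝ V] {e u : V}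

theorem exists_eq_add_smul_of_mem_affineSpan_pair {p p₁ p₂ : V} (h : p ∈ line[ℝ, p₁, p₂]) :
    ∃ r : ℝ, p = p₁ + r • (p₂ - p₁) := by
  rw [← vsub_vadd p p₁, vadd_left_mem_affineSpan_pair] at h
  obtain ⟨r, hr⟩ := h
  exact ⟨r, eq_add_of_sub_eq' hr.symm⟩

theorem eq_add_inner_smul_of_mem_affineSpan_pair {p p₀ q : V} (h : p ∈ line[ℝ, q, p₀])
    (hq : ‖q - p₀‖ = 1) : p = p₀ + inner ℝ (p - p₀) (q - p₀) • (q - p₀) := by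
  rw [Set.pair_comm] at h
  obtain ⟨r, rfl⟩ := exists_eq_add_smul_of_mem_affineSpan_pair h
  rw [add_sub_cancel_left, real_inner_smul_left, real_inner_self_eq_norm_sq, hq, one_pow, mul_one]

theorem exists_unit_frame_of_mem_affineSpan_pair {A B H u : V} (hAB : A ≠ B)
    (hH : H ∈ line[ℝ, A, B]) (hu : inner ℝ u (B - A) = 0) :
    ∃ (e : V) (a b : ℝ), ‖e‖ = 1 ∧ inner ℝ e u = 0 ∧ 0 < a + b ∧
      A = H - a • e ∧ B = H + b • e := by
  obtain ⟨t, rfl⟩ := exists_eq_add_smul_of_mem_affineSpan_pair hH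
  have hc : 0 < ‖B - A‖ := norm_pos_iff.mpr (sub_ne_zero.mpr hAB.symm)
  have hce : ‖B - A‖ • ‖B - A‖⁻¹ • (B - A) = B - A := by
    rw [smul_smul, mul_inv_cancel₀ hc.ne', one_smul]
  refine ⟨‖B - A‖⁻¹ • (B - A), t * ‖B - A‖, (1 - t) * ‖B - A‖, ?_, ?_, by nlinarith, ?_, ?_⟩
  · rw [norm_smul, norm_inv, norm_norm, inv_mul_cancel₀ hc.ne']
  · rw [real_inner_smul_left, real_inner_comm, hu, mul_zero]
  · rw [mul_smul, hce]; abel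
  · rw [mul_smul, hce]; module

theorem norm_smul_add_smul_sq (he : ‖e‖ = 1) (hu : ‖u‖ = 1) (heu : inner ℝ e u = 0) (x y : ℝ) :
    ‖x • e + y • u‖ ^ 2 = x ^ 2 + y ^ 2 := by
  rw [norm_add_sq_real, real_inner_smul_left, real_inner_smul_right, heu, norm_smul, norm_smul,
    he, hu, Real.norm_eq_abs, Real.norm_eq_abs]
  ring_nf
  rw [sq_abs, sq_abs]

theorem smul_add_smul_inj (he : ‖e‖ = 1) (hu : ‖u‖ = 1) (heu : inner ℝ e u = 0) {x y x' y' : ℝ}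
    (h : x • e + y • u = x' • e + y' • u) : x = x' ∧ y = y' := by
  have hee : inner ℝ e e = 1 := by rw [real_inner_self_eq_norm_sq, he, one_pow]
  have huu : inner ℝ u u = 1 := by rw [real_inner_self_eq_norm_sq, hu, one_pow]
  have hue : inner ℝ u e = 0 := by rw [real_inner_comm, heu]
  constructor
  · simpa only [inner_add_right, real_inner_smul_right, hee, heu, mul_one, mul_zero, add_zero]
      using congrArg (inner ℝ e ·) h
  · simpa only [inner_add_right, real_inner_smul_right, huu, hue, mul_one, mul_zero, zero_add]
      using congrArg (inner ℝ u ·) h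

theorem cot_angle_smul_add (he : ‖e‖ = 1) (hu : ‖u‖ = 1) (heu : inner ℝ e u = 0) (x : ℝ) :
    cot (InnerProductGeometry.angle e (x • e + u)) = x := by
  have hN : ‖x • e + u‖ ^ 2 = x ^ 2 + 1 := by
    simpa using norm_smul_add_smul_sq he hu heu x 1
  have hee : inner ℝ e e = 1 := by rw [real_inner_self_eq_norm_sq, he, one_pow]
  have hinner : inner ℝ e (x • e + u) = x := by
    rw [inner_add_right, real_inner_smul_right, hee, heu, mul_one, add_zero]
  have hcos : cos (InnerProductGeometry.angle e (x • e + u)) * ‖x • e + u‖ = x := by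
    simpa only [he, one_mul, hinner] using
      InnerProductGeometry.cos_angle_mul_norm_mul_norm e (x • e + u)
  have hsin : sin (InnerProductGeometry.angle e (x • e + u)) * ‖x • e + u‖ = 1 := by
    simpa only [he, one_mul, hinner, hee, real_inner_self_eq_norm_sq, hN, add_sub_cancel_left,
      ← sq, Real.sqrt_one] using InnerProductGeometry.sin_angle_mul_norm_mul_norm e (x • e + u)
  have hpos : ‖x • e + u‖ ≠ 0 := by
    intro h
    rw [h] at hN
    nlinarith
  rw [cot_eq_cos_div_sin, ← mul_div_mul_right _ _ hpos, hcos, hsin, div_one]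

theorem cot_angle_of_frame (he : ‖e‖ = 1) (hu : ‖u‖ = 1) (heu : inner ℝ e u = 0)
    {H A B C : V} {a b : ℝ} (hab : 0 < a + b) (hA : A = H - a • e) (hB : B = H + b • e)
    (hC : C = H + u) : cot (∠ B A C) = a := by
  have hBA : B -ᵥ A = (a + b) • e := by rw [hA, hB, vsub_eq_sub]; module
  have hCA : C -ᵥ A = a • e + u := by rw [hA, hC, vsub_eq_sub]; module
  rw [EuclideanGeometry.angle, hBA, hCA, InnerProductGeometry.angle_smul_left_of_pos _ _ hab,
    cot_angle_smul_add he hu heu]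

theorem exists_cevian_relations (he : ‖e‖ = 1) (hu : ‖u‖ = 1) (heu : inner ℝ e u = 0)
    {H A B C A₁ O : V} {a b y : ℝ} (hA : A = H - a • e) (hB : B = H + b • e) (hC : C = H + u)
    (hO : O = H + y • u) (hA₁ : A₁ ∈ line[ℝ, B, C]) (hOA₁ : O ∈ segment ℝ A A₁) :
    ∃ s : ℝ, s * (a + y * b) = y * (a + b) ∧ y ^ 2 * dist A A₁ ^ 2 = s ^ 2 * (a ^ 2 + y ^ 2) := by
  obtain ⟨s, rfl⟩ := exists_eq_add_smul_of_mem_affineSpan_pair hA₁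
  rw [segment_eq_image'] at hOA₁
  obtain ⟨k, -, hk⟩ := hOA₁
  set p := a + (1 - s) * b
  have hAA₁ : B + s • (C - B) - A = p • e + s • u := by rw [hA, hB, hC]; module
  obtain ⟨hka, hky⟩ : k * p = a ∧ k * s = y := by
    refine smul_add_smul_inj he hu heu ?_
    have hOA : O - A = a • e + y • u := by rw [hO, hA]; module
    rw [mul_smul, mul_smul, ← smul_add, ← hAA₁, ← hOA, ← hk, add_sub_cancel_left]
  refine ⟨s, by linear_combination p * hky - s * hka, ?_⟩
  rw [dist_eq_norm', hAA₁, norm_smul_add_smul_sq he hu heu]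
  linear_combination (y * p + s * a) * (s * hka - p * hky)

end Frame

theorem cevians_on_altitude (A B C H O A₁ B₁ : Pt) (α β y : ℝ)
    (hABC : AffineIndependent ℝ ![A, B, C])
    (hadef : α = ∠ B A C) (hbdef : β = ∠ A B C)
    (hH : H ∈ affineSpan ℝ ({A, B} : Set Pt))
    (hCH : (inner ℝ (C -ᵥ H) (B -ᵥ A) : ℝ) = 0)
    (hCH1 : dist C H = 1)
    (hO : O ∈ affineSpan ℝ ({C, H} : Set Pt))
    (hy : y = (inner ℝ (O -ᵥ H) (C -ᵥ H) : ℝ) / ‖C -ᵥ H‖)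
    (hy0 : y ≠ 0)
    (hA₁ : A₁ ∈ affineSpan ℝ ({B, C} : Set Pt))
    (hB₁ : B₁ ∈ affineSpan ℝ ({A, C} : Set Pt))
    (hO₁ : O ∈ segment ℝ A A₁) (hO₂ : O ∈ segment ℝ B B₁)
    (hlen : dist A A₁ = dist B B₁) :
    Real.cot α = Real.cot β ∨
      y ^ 3 + y * (Real.cot α ^ 2 + Real.cot β ^ 2 - 1)
        + 2 * Real.cot α * Real.cot β = 0 := by
  have hAB : A ≠ B := hABC.injective.ne (show (0 : Fin 3) ≠ 1 by decide)
  have hu : ‖C - H‖ = 1 := by rwa [← dist_eq_norm]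
  simp only [vsub_eq_sub] at hCH hy
  rw [hu, div_one] at hy
  obtain ⟨e, a, b, he, heu, hab, hA, hB⟩ := exists_unit_frame_of_mem_affineSpan_pair hAB hH hCH
  have hC : C = H + (C - H) := (add_sub_cancel H C).symm
  have hO' : O = H + y • (C - H) := hy ▸ eq_add_inner_smul_of_mem_affineSpan_pair hO hu
  have he' : ‖-e‖ = 1 := by rwa [norm_neg]
  have heu' : inner ℝ (-e) (C - H) = 0 := by rw [inner_neg_left, heu, neg_zero]
  have hA' : A = H + a • -e := by rw [hA, smul_neg, ← sub_eq_add_neg]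
  have hB' : B = H - b • -e := by rw [hB, smul_neg, sub_neg_eq_add]
  have hcotα : cot α = a := hadef ▸ cot_angle_of_frame he hu heu hab hA hB hC
  have hcotβ : cot β = b :=
    hbdef ▸ cot_angle_of_frame he' hu heu' (add_comm a b ▸ hab) hB' hA' hC
  obtain ⟨s₀, h₀, hd₀⟩ := exists_cevian_relations he hu heu hA hB hC hO' hA₁ hO₁
  obtain ⟨s₁, h₁, hd₁⟩ := exists_cevian_relations he' hu heu' hB' hA' hC hO' hB₁ hO₂
  rw [hcotα, hcotβ]
  exact eq_or_cubic_eq_zero_of_cevian_relations hy0 hab.ne' h₀ (add_comm b a ▸ h₁)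
    (by rw [← hd₀, ← hd₁, hlen])
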